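/- arXiv:1703.03152 — 5 statements merged into one kernel-verified Lean document; each statement's English description precedes it below -/
import Mathlib

section
/- Let ρ_t be a rank-one orthogonal projection (a pure state) on a finite-dimensional complex Hilbert space, let N ∈ ℕ, let λ_1, …, λ_N be real numbers with 0 < Δ := λ_1 ≤ λ_2 ≤ … ≤ λ_N, and let P_1, …, P_N be positive semidefinite operators satisfying ρ_t + Σ_{l=1}^N P_l = 1 and tr(ρ_t P_l) = 0 for all l. Define W := 1 − Δ⁻¹ Σ_{l=1}^N λ_l P_l. Then for every density matrix ρ_p: (i) tr(W ρ_p) = 1 if and only if ρ_p = ρ_t, and (ii) tr(W ρ_p) ≤ tr(ρ_t ρ_p). -/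
/-!
For a density matrix `ρ`, every `tr (P l * ρ)` is nonnegative and `λ l / Δ ≥ 1`, so
`tr (W ρ) = 1 - ∑ (λ l / Δ) tr (P l ρ) ≤ 1 - ∑ tr (P l ρ) = tr (ρt ρ) ≤ 1`.
Hence `tr (W ρ) = 1` forces fidelity one. Then `tr ((1 - ρt) ρ) = 0` with both factors positive
semidefinite, so `(1 - ρt) ρ = 0`, i.e. `ρ = ρt ρ = ρ ρt`, and since `ρt` has rank one,
`ρ = ρt ρ ρt = tr (ρt ρ) • ρt = ρt`.
-/

open Matrix
open scoped ComplexOrder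

namespace Matrix

variable {𝕜 n : Type*} [RCLike 𝕜] [Fintype n]

lemma trace_conjTranspose_mul_self_mul_conjTranspose_mul_self (X Y : Matrix n n 𝕜) :
    (Xᴴ * X * (Yᴴ * Y)).trace = (X * Yᴴ * (X * Yᴴ)ᴴ).trace := by
  rw [conjTranspose_mul, conjTranspose_conjTranspose, ← trace_mul_cycle]
  simp only [Matrix.mul_assoc]

open scoped MatrixOrder in
lemma PosSemidef.exists_eq_conjTranspose_mul_self {A : Matrix n n 𝕜} (hA : A.PosSemidef) :
    ∃ X : Matrix n n 𝕜, A = Xᴴ * X := by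
  classical
  exact CStarAlgebra.nonneg_iff_eq_star_mul_self.mp hA.nonneg

lemma PosSemidef.trace_mul_nonneg {A B : Matrix n n 𝕜} (hA : A.PosSemidef) (hB : B.PosSemidef) :
    0 ≤ (A * B).trace := by
  obtain ⟨X, rfl⟩ := hA.exists_eq_conjTranspose_mul_self
  obtain ⟨Y, rfl⟩ := hB.exists_eq_conjTranspose_mul_self
  rw [trace_conjTranspose_mul_self_mul_conjTranspose_mul_self]
  exact (posSemidef_self_mul_conjTranspose _).trace_nonneg

lemma PosSemidef.mul_eq_zero_of_trace_mul_eq_zero {A B : Matrix n n 𝕜} (hA : A.PosSemidef)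
    (hB : B.PosSemidef) (h : (A * B).trace = 0) : A * B = 0 := by
  obtain ⟨X, rfl⟩ := hA.exists_eq_conjTranspose_mul_self
  obtain ⟨Y, rfl⟩ := hB.exists_eq_conjTranspose_mul_self
  rw [trace_conjTranspose_mul_self_mul_conjTranspose_mul_self,
    trace_mul_conjTranspose_self_eq_zero_iff] at h
  calc Xᴴ * X * (Yᴴ * Y) = Xᴴ * (X * Yᴴ) * Y := by simp only [Matrix.mul_assoc]
    _ = 0 := by rw [h, Matrix.mul_zero, Matrix.zero_mul]

lemma exists_eq_vecMulVec_of_rank_le_one {K m : Type*} [Field K] [Finite m]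
    {A : Matrix m n K} (h : A.rank ≤ 1) : ∃ u : m → K, ∃ v : n → K, A = vecMulVec u v := by
  classical
  have := Fintype.ofFinite m
  rw [Matrix.rank, finrank_le_one_iff] at h
  obtain ⟨⟨u, _⟩, hu⟩ := h
  choose c hc using fun j => hu ⟨A.mulVecLin (Pi.single j 1), LinearMap.mem_range_self _ _⟩
  refine ⟨u, c, Matrix.ext fun i j => ?_⟩
  have hij := congrFun (congrArg Subtype.val (hc j)) i
  simp only [SetLike.mk_smul_mk, Pi.smul_apply, smul_eq_mul, mulVecLin_apply, mulVec_single_one,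
    col_apply] at hij
  rw [vecMulVec_apply, ← hij, mul_comm]

lemma vecMulVec_mul_mul_vecMulVec {R : Type*} [CommRing R] (u v : n → R) (M : Matrix n n R) :
    vecMulVec u v * M * vecMulVec u v = (vecMulVec u v * M).trace • vecMulVec u v := by
  ext i j
  simp only [mul_apply, vecMulVec_apply, smul_apply, smul_eq_mul, trace, diag_apply,
    Finset.sum_mul]
  exact Finset.sum_congr rfl fun _ _ => Finset.sum_congr rfl fun _ _ => by ring

lemma mul_mul_eq_trace_mul_smul_of_rank_le_one {K : Type*} [Field K] {A : Matrix n n K}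
    (hA : A.rank ≤ 1) (M : Matrix n n K) : A * M * A = (A * M).trace • A := by
  obtain ⟨u, v, rfl⟩ := exists_eq_vecMulVec_of_rank_le_one hA
  exact vecMulVec_mul_mul_vecMulVec u v M

variable [DecidableEq n]

lemma posSemidef_one_sub_of_isHermitian_of_mul_self {P : Matrix n n 𝕜} (hP : P.IsHermitian)
    (hPP : P * P = P) : (1 - P).PosSemidef := by
  have : 1 - P = (1 - P)ᴴ * (1 - P) := by
    rw [conjTranspose_sub, conjTranspose_one, hP.eq, sub_mul, mul_sub, mul_sub, hPP]; simp
  exact this ▸ posSemidef_conjTranspose_mul_self _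

theorem eq_of_trace_mul_eq_one {ρ σ : Matrix n n 𝕜} (hρ : ρ.IsHermitian) (hρρ : ρ * ρ = ρ)
    (hrank : ρ.rank ≤ 1) (hσ : σ.PosSemidef) (htr : σ.trace = 1) (hfid : (ρ * σ).trace = 1) :
    σ = ρ := by
  have hleft : (1 - ρ) * σ = 0 :=
    (posSemidef_one_sub_of_isHermitian_of_mul_self hρ hρρ).mul_eq_zero_of_trace_mul_eq_zero hσ
      (by rw [sub_mul, one_mul, trace_sub, htr, hfid, sub_self])
  have hσl : ρ * σ = σ := by rwa [sub_mul, one_mul, sub_eq_zero, eq_comm] at hleft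
  have hσr : σ * ρ = σ := by
    simpa only [conjTranspose_mul, hρ.eq, hσ.isHermitian.eq] using congrArg conjTranspose hσl
  calc σ = ρ * σ * ρ := by rw [hσl, hσr]
    _ = ρ := by rw [mul_mul_eq_trace_mul_smul_of_rank_le_one hrank, hfid, one_smul]

end Matrix

theorem fidelity_witness_general {n N : ℕ} (hN : 0 < N)
    (ρt : Matrix (Fin n) (Fin n) ℂ)
    (hherm : ρt.IsHermitian) (hproj : ρt * ρt = ρt) (hrank : ρt.rank = 1)
    (lam : Fin N → ℝ) (hmono : Monotone lam) (hΔ : 0 < lam ⟨0, hN⟩)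
    (P : Fin N → Matrix (Fin n) (Fin n) ℂ) (hP : ∀ l, (P l).PosSemidef)
    (hres : ρt + ∑ l, P l = 1) (horth : ∀ l, (ρt * P l).trace = 0)
    (W : Matrix (Fin n) (Fin n) ℂ)
    (hW : W = 1 - ((lam ⟨0, hN⟩ : ℂ))⁻¹ • ∑ l, (lam l : ℂ) • P l) :
    ∀ ρp : Matrix (Fin n) (Fin n) ℂ, ρp.PosSemidef → ρp.trace = 1 →
      (((W * ρp).trace = 1 ↔ ρp = ρt) ∧ (W * ρp).trace ≤ (ρt * ρp).trace) := by
  intro ρp hρp htr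
  have hWtr : (W * ρp).trace
      = 1 - ∑ l, ((lam l / lam ⟨0, hN⟩ : ℝ) : ℂ) * (P l * ρp).trace := by
    simp only [hW, sub_mul, one_mul, trace_sub, htr, smul_mul_assoc, Finset.sum_mul, trace_smul,
      trace_sum, smul_eq_mul, Finset.mul_sum]
    congr 1
    refine Finset.sum_congr rfl fun l _ => ?_
    push_cast
    ring
  have hsum : ∑ l, (P l * ρp).trace = 1 - (ρt * ρp).trace := by
    rw [← trace_sum, ← Finset.sum_mul, eq_sub_of_add_eq' hres, sub_mul, one_mul, trace_sub, htr]
  have hPρ : ∀ l, 0 ≤ (P l * ρp).trace := fun l => (hP l).trace_mul_nonneg hρp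
  have hle : (W * ρp).trace ≤ (ρt * ρp).trace := by
    rw [hWtr, ← sub_sub_cancel 1 (ρt * ρp).trace, ← hsum]
    refine sub_le_sub_left (Finset.sum_le_sum fun l _ => le_mul_of_one_le_left (hPρ l) ?_) 1
    exact_mod_cast (one_le_div hΔ).mpr (hmono (Nat.zero_le l.val))
  refine ⟨⟨fun h => ?_, ?_⟩, hle⟩
  · have hfid_le : (ρt * ρp).trace ≤ 1 :=
      sub_nonneg.mp (hsum ▸ Finset.sum_nonneg fun l _ => hPρ l)
    exact eq_of_trace_mul_eq_one hherm hproj hrank.le hρp htr (le_antisymm hfid_le (h ▸ hle))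
  · rintro rfl
    simp only [hWtr, trace_mul_comm (P _), horth, mul_zero, Finset.sum_const_zero, sub_zero]
end

section
/- Let ρ_t be a rank-one orthogonal projection on a finite-dimensional complex Hilbert space, let N ∈ ℕ, let λ_1, …, λ_N be real numbers with 0 < Δ := λ_1 ≤ λ_2 ≤ … ≤ λ_N, and let P_1, …, P_N be positive semidefinite operators satisfying ρ_t + Σ_{l=1}^N P_l = 1 and tr(ρ_t P_l) = 0 for all l. Define W := 1 − Δ⁻¹ Σ_{l=1}^N λ_l P_l. Then the operator ρ_t − W is positive semidefinite. -/
/-!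
Since `ρt = 1 - ∑ l, P l`, the difference `ρt - W` equals `∑ l, (λ l / Δ - 1) • P l`, a combination
of positive semidefinite matrices whose coefficients are nonnegative because `Δ = λ 1` is the
smallest of the `λ l`.
-/

open Matrix
open scoped ComplexOrder

theorem sub_one_sub_smul_sum_eq_sum_smul {ι R A : Type*} [Fintype ι] [Ring R] [Ring A]
    [Module R A] {ρ : A} {P : ι → A} (hres : ρ + ∑ l, P l = 1) (c : R) (μ : ι → R) :
    ρ - (1 - c • ∑ l, μ l • P l) = ∑ l, (c * μ l - 1) • P l := by
  rw [← hres]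
  simp only [Finset.smul_sum, smul_smul, sub_smul, one_smul, Finset.sum_sub_distrib]
  abel

theorem fidelity_witness_loewner_dominated_general {n N : ℕ} (hN : 0 < N)
    (ρt : Matrix (Fin n) (Fin n) ℂ)
    (lam : Fin N → ℝ) (hmono : Monotone lam) (hΔ : 0 < lam ⟨0, hN⟩)
    (P : Fin N → Matrix (Fin n) (Fin n) ℂ) (hP : ∀ l, (P l).PosSemidef)
    (hres : ρt + ∑ l, P l = 1)
    (W : Matrix (Fin n) (Fin n) ℂ)
    (hW : W = 1 - ((lam ⟨0, hN⟩ : ℂ))⁻¹ • ∑ l, (lam l : ℂ) • P l) :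
    (ρt - W).PosSemidef := by
  have hcoef : ∀ l, 0 ≤ ((lam ⟨0, hN⟩ : ℂ))⁻¹ * lam l - 1 := fun l => by
    have hle : lam ⟨0, hN⟩ ≤ lam l := hmono (Fin.le_iff_val_le_val.mpr (Nat.zero_le _))
    have hreal : ((lam ⟨0, hN⟩ : ℂ))⁻¹ * lam l - 1 = ((lam l / lam ⟨0, hN⟩ - 1 : ℝ) : ℂ) := by
      push_cast
      ring
    rw [hreal, Complex.zero_le_real, sub_nonneg]
    exact (one_le_div hΔ).mpr hle
  rw [hW, sub_one_sub_smul_sum_eq_sum_smul hres]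
  exact posSemidef_sum _ fun l _ => (hP l).smul (hcoef l)

theorem fidelity_witness_loewner_dominated {n N : ℕ} (hN : 0 < N)
    (ρt : Matrix (Fin n) (Fin n) ℂ)
    (hherm : ρt.IsHermitian) (hproj : ρt * ρt = ρt) (hrank : ρt.rank = 1)
    (lam : Fin N → ℝ) (hmono : Monotone lam) (hΔ : 0 < lam ⟨0, hN⟩)
    (P : Fin N → Matrix (Fin n) (Fin n) ℂ) (hP : ∀ l, (P l).PosSemidef)
    (hres : ρt + ∑ l, P l = 1) (horth : ∀ l, (ρt * P l).trace = 0)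
    (W : Matrix (Fin n) (Fin n) ℂ)
    (hW : W = 1 - ((lam ⟨0, hN⟩ : ℂ))⁻¹ • ∑ l, (lam l : ℂ) • P l) :
    (ρt - W).PosSemidef :=
  fidelity_witness_loewner_dominated_general hN ρt lam hmono hΔ P hP hres W hW
end

section
/- Let m_1, …, m_{2L} be a Majorana representation by n×n complex matrices, let A ∈ ℝ^{2L×2L} be antisymmetric, and let H(A) := (i/4) Σ_{j,k=1}^{2L} A_{j,k} m_j m_k. Then for every t ∈ ℝ and every j = 1, …, 2L, exp(i t H(A)) · m_j · exp(−i t H(A)) = Σ_{k=1}^{2L} (exp(t A))_{j,k} m_k, where exp(t A) is the matrix exponential of the real matrix t A (its entries cast into ℂ). -/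
/-!
Let `D` be the diagonal matrix with entries `B` and `V` the square matrix all of whose columns
are `(v i)ᵢ`. The commutator relations `[B, v i] = ∑ₖ M i k v k` say exactly that
`V * (-D) = (M - D) * V`; exponentiating this semiconjugacy and using that `D` commutes with `M`
(whose entries commute with `B`) gives `exp D * V * exp (-D) = exp M * V`, whose diagonal
entries are the claimed identities. For Majorana operators the anticommutation relations and
the antisymmetry of `A` give `[∑ A j k m j m k, m l] = -4 ∑ₖ A l k m k`, so
`[i t H, m l] = ∑ₖ (t A) l k m k`.
-/

open Matrix NormedSpace

section Conjugation

variable {E ι : Type*} [NormedRing E] [NormedAlgebra ℚ E] [CompleteSpace E]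
  [Fintype ι] [DecidableEq ι]

-- The operator norm's uniformity is the product one only after unfolding, so instance search
-- does not find completeness by itself.
open scoped Norms.Operator in
theorem Matrix.semiconjBy_exp_right {X A B : Matrix ι ι E} (h : SemiconjBy X A B) :
    SemiconjBy X (exp A) (exp B) :=
  have : @CompleteSpace (Matrix ι ι E) PseudoMetricSpace.toUniformSpace :=
    instCompleteSpace ι ι E
  h.exp_right

open scoped Norms.Operator in
theorem Matrix.exp_scalar (B : E) : exp (scalar ι B) = scalar ι (exp B) :=
  (map_exp (scalar ι) (continuous_pi fun _ => continuous_id).matrix_diagonal B).symm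

theorem exp_mul_mul_exp_neg_eq_sum_of_commutator (B : E) (v : ι → E) (M : Matrix ι ι E)
    (hBM : ∀ i k, Commute B (M i k)) (hv : ∀ i, B * v i - v i * B = ∑ k, M i k * v k) (j : ι) :
    exp B * v j * exp (-B) = ∑ k, exp M j k * v k := by
  let V : Matrix ι ι E := of fun i _ => v i
  have hD : Commute (scalar ι B) M := by
    ext i k
    simp [(hBM i k).eq]
  have hVB : SemiconjBy V (-scalar ι B) (M - scalar ι B) := by
    rw [SemiconjBy, Matrix.mul_neg, Matrix.sub_mul, scalar_apply]
    ext i k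
    rw [Matrix.neg_apply, Matrix.sub_apply, mul_diagonal, diagonal_mul, Matrix.mul_apply]
    simp only [V, of_apply, ← hv]
    abel
  have key : exp (scalar ι B) * V * exp (-scalar ι B) = exp M * V := by
    rw [mul_assoc, (semiconjBy_exp_right hVB).eq, sub_eq_neg_add,
      Matrix.exp_add_of_commute _ _ hD.neg_left, ← mul_assoc, ← mul_assoc,
      ← Matrix.exp_add_of_commute _ _ (Commute.refl (scalar ι B)).neg_right, add_neg_cancel,
      NormedSpace.exp_zero, one_mul]
  rw [← map_neg, exp_scalar, exp_scalar] at key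
  have hjj := congr_arg (fun X => X j j) key
  simp only [scalar_apply, mul_diagonal, diagonal_mul] at hjj
  simpa only [Matrix.mul_apply, V, of_apply] using hjj

end Conjugation

open scoped Norms.Operator in
theorem Matrix.exp_map_algebraMap {𝕜 E ι : Type*} [NormedField 𝕜] [NormedAlgebra ℚ 𝕜]
    [CompleteSpace 𝕜] [NormedRing E] [NormedAlgebra 𝕜 E] [Algebra ℚ E] [Fintype ι]
    [DecidableEq ι] (M : Matrix ι ι 𝕜) :
    exp (M.map (algebraMap 𝕜 E)) = (exp M).map (algebraMap 𝕜 E) :=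
  have : @CompleteSpace (Matrix ι ι 𝕜) PseudoMetricSpace.toUniformSpace :=
    instCompleteSpace ι ι 𝕜
  (map_exp (algebraMap 𝕜 E).mapMatrix
    (continuous_id.matrix_map (algebraMapCLM 𝕜 E).continuous) M).symm

theorem exp_mul_mul_exp_neg_eq_sum_smul_of_commutator {𝕜 E ι : Type*} [NormedField 𝕜]
    [NormedAlgebra ℚ 𝕜] [CompleteSpace 𝕜] [NormedRing E] [NormedAlgebra 𝕜 E] [NormedAlgebra ℚ E]
    [CompleteSpace E] [Fintype ι] [DecidableEq ι] (B : E) (v : ι → E) (M : Matrix ι ι 𝕜)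
    (hv : ∀ i, B * v i - v i * B = ∑ k, M i k • v k) (j : ι) :
    exp B * v j * exp (-B) = ∑ k, exp M j k • v k := by
  have h := exp_mul_mul_exp_neg_eq_sum_of_commutator B v (M.map (algebraMap 𝕜 E))
    (fun i k => Algebra.commute_algebraMap_right (M i k) B)
    (fun i => by simpa only [map_apply, ← Algebra.smul_def] using hv i) j
  simpa only [Matrix.exp_map_algebraMap, map_apply, ← Algebra.smul_def] using h

section Anticommutation

variable {ι R : Type*} [DecidableEq ι] [Ring R]

theorem mul_mul_sub_mul_mul_of_anticomm (m : ι → R)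
    (hcar : ∀ j k, m j * m k + m k * m j = if j = k then 2 else 0) (j k l : ι) :
    m j * m k * m l - m l * (m j * m k)
      = (if k = l then 2 * m j else 0) - if j = l then 2 * m k else 0 := by
  have hexpand : m j * m k * m l - m l * (m j * m k)
      = m j * (m k * m l + m l * m k) - (m j * m l + m l * m j) * m k := by noncomm_ring
  rw [hexpand, hcar, hcar]
  split_ifs <;> simp [mul_two, two_mul]

theorem quadratic_commutator_of_anticomm [Fintype ι] {K : Type*} [CommRing K] [Algebra K R]
    (m : ι → R) (hcar : ∀ j k, m j * m k + m k * m j = if j = k then 2 else 0)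
    (A : Matrix ι ι K) (hA : Aᵀ = -A) (l : ι) :
    (∑ j, ∑ k, A j k • (m j * m k)) * m l - m l * ∑ j, ∑ k, A j k • (m j * m k)
      = ∑ k, (-4 * A l k) • m k := by
  have hA' : ∀ k, A k l = -A l k := fun k => by simpa using congrFun (congrFun hA l) k
  calc (∑ j, ∑ k, A j k • (m j * m k)) * m l - m l * ∑ j, ∑ k, A j k • (m j * m k)
      = ∑ j, ∑ k, A j k • (m j * m k * m l - m l * (m j * m k)) := by
        simp only [Finset.sum_mul, Finset.mul_sum, ← Finset.sum_sub_distrib, smul_mul_assoc,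
          mul_smul_comm, smul_sub]
    _ = ∑ k, (A k l • (2 * m k) - A l k • (2 * m k)) := by
        simp only [mul_mul_sub_mul_mul_of_anticomm m hcar, smul_sub, Finset.sum_sub_distrib,
          smul_ite, smul_zero, Finset.sum_ite_irrel, Finset.sum_const_zero, Finset.sum_ite_eq',
          Finset.mem_univ, if_true]
    _ = ∑ k, (-4 * A l k) • m k := by
        refine Finset.sum_congr rfl fun k _ => ?_
        rw [hA', ← sub_smul, two_mul, smul_add, ← add_smul]
        congr 1
        ring

end Anticommutation

theorem majorana_heisenberg_evolution_general {L n : ℕ}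
    (m : Fin (2 * L) → Matrix (Fin n) (Fin n) ℂ)
    (hcar : ∀ j k, m j * m k + m k * m j = if j = k then (2 : ℂ) • 1 else 0)
    (A : Matrix (Fin (2 * L)) (Fin (2 * L)) ℝ) (hA : Aᵀ = -A)
    (H : Matrix (Fin n) (Fin n) ℂ)
    (hH : H = (Complex.I / 4) • ∑ j, ∑ k, (A j k : ℂ) • (m j * m k)) (t : ℝ) :
    ∀ j, exp ((Complex.I * (t : ℂ)) • H) * m j * exp ((-(Complex.I * (t : ℂ))) • H)
      = ∑ k, ((exp (t • A) j k : ℝ) : ℂ) • m k := by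
  intro j
  have hcar' : ∀ j k, m j * m k + m k * m j = if j = k then 2 else 0 := by
    simpa only [two_smul, one_add_one_eq_two] using hcar
  have hB : ∀ l, (Complex.I * t) • H * m l - m l * ((Complex.I * t) • H)
      = ∑ k, (t • A) l k • m k := by
    intro l
    simp only [hH, Complex.coe_smul]
    rw [smul_mul_assoc, smul_mul_assoc, mul_smul_comm, mul_smul_comm, ← smul_sub, ← smul_sub,
      quadratic_commutator_of_anticomm m hcar' A hA, Finset.smul_sum, Finset.smul_sum]
    refine Finset.sum_congr rfl fun k _ => ?_
    rw [← Complex.coe_smul, ← Complex.coe_smul, smul_smul, smul_smul]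
    congr 1
    rw [Matrix.smul_apply, smul_eq_mul]
    push_cast
    linear_combination (-(t : ℂ) * A l k) * Complex.I_sq
  rw [neg_smul]
  simp only [Complex.coe_smul]
  -- `exp` only sees the topology, which the operator norm induces as well.
  open scoped Norms.Operator in
  exact exp_mul_mul_exp_neg_eq_sum_smul_of_commutator _ m (t • A) hB j

theorem majorana_heisenberg_evolution {L n : ℕ}
    (m : Fin (2 * L) → Matrix (Fin n) (Fin n) ℂ)
    (hsa : ∀ j, (m j)ᴴ = m j)
    (hcar : ∀ j k, m j * m k + m k * m j = if j = k then (2 : ℂ) • 1 else 0)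
    (A : Matrix (Fin (2 * L)) (Fin (2 * L)) ℝ) (hA : Aᵀ = -A)
    (H : Matrix (Fin n) (Fin n) ℂ)
    (hH : H = (Complex.I / 4) • ∑ j, ∑ k, (A j k : ℂ) • (m j * m k)) (t : ℝ) :
    ∀ j, exp ((Complex.I * (t : ℂ)) • H) * m j * exp ((-(Complex.I * (t : ℂ))) • H)
      = ∑ k, ((exp (t • A) j k : ℝ) : ℂ) • m k :=
  majorana_heisenberg_evolution_general m hcar A hA H hH t
end

section
/- Let J, B ∈ ℝ and consider the transverse-field Ising Hamiltonian H_TFIM := −J Σ_{k=1}^{L−1} σ^x_k σ^x_{k+1} − B Σ_{k=1}^{L} σ^z_k on (ℂ²)^{⊗L}. Define the antisymmetric matrix A(J,B) ∈ ℝ^{2L×2L} whose only nonzero entries are A(J,B)_{2k−1,2k} = 2B = −A(J,B)_{2k,2k−1} for k = 1, …, L and A(J,B)_{2k,2k+1} = 2J = −A(J,B)_{2k+1,2k} for k = 1, …, L−1. Then, with the Jordan–Wigner Majorana matrices, H_TFIM = (i/4) Σ_{j,k=1}^{2L} A(J,B)_{j,k} m_j m_k. -/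
open Matrix

noncomputable section

def pauliX : Matrix (Fin 2) (Fin 2) ℂ := !![0, 1; 1, 0]
def pauliY : Matrix (Fin 2) (Fin 2) ℂ := !![0, -Complex.I; Complex.I, 0]
def pauliZ : Matrix (Fin 2) (Fin 2) ℂ := !![1, 0; 0, -1]

def pauliAt (L : ℕ) (σ : Matrix (Fin 2) (Fin 2) ℂ) (k : Fin L) :
    Matrix (Fin L → Fin 2) (Fin L → Fin 2) ℂ :=
  fun ν μ => ∏ j, if j = k then σ (ν j) (μ j) else (if ν j = μ j then 1 else 0)

lemma pauliZ_apply (a b : Fin 2) :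
    pauliZ a b = if a = b then (-1 : ℂ) ^ ((a : ℕ)) else 0 := by
  fin_cases a <;> fin_cases b <;> simp [pauliZ]

lemma pauliAt_Z_diagonal (L : ℕ) (k : Fin L) :
    pauliAt L pauliZ k = Matrix.diagonal (fun ν => (-1 : ℂ) ^ ((ν k : ℕ))) := by
  ext ν μ
  by_cases h : ν = μ
  · subst h
    simp only [pauliAt, Matrix.diagonal_apply_eq, eq_self_iff_true, if_true]
    calc (∏ j, if j = k then pauliZ (ν j) (ν j) else 1)
        = pauliZ (ν k) (ν k) := by
          rw [Finset.prod_ite_eq' Finset.univ k (fun j => pauliZ (ν j) (ν j))]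
          simp
      _ = (-1 : ℂ) ^ ((ν k : ℕ)) := by rw [pauliZ_apply, if_pos rfl]
  · rw [Matrix.diagonal_apply_ne _ h]
    obtain ⟨j₀, hj₀⟩ := Function.ne_iff.mp h
    refine Finset.prod_eq_zero (Finset.mem_univ j₀) ?_
    by_cases hjk : j₀ = k
    · rw [if_pos hjk, pauliZ_apply, if_neg hj₀]
    · simp [hjk, hj₀]

lemma pauliAt_Z_commute (L : ℕ) (j k : Fin L) :
    Commute (pauliAt L pauliZ j) (pauliAt L pauliZ k) := by
  rw [pauliAt_Z_diagonal, pauliAt_Z_diagonal]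
  unfold Commute SemiconjBy
  rw [Matrix.diagonal_mul_diagonal, Matrix.diagonal_mul_diagonal]
  exact congrArg _ (funext fun i => mul_comm _ _)

/-- The Jordan–Wigner string `∏_{j<k} σ^z_j`. -/
def zString (L : ℕ) (k : Fin L) : Matrix (Fin L → Fin 2) (Fin L → Fin 2) ℂ :=
  Finset.noncommProd (Finset.univ.filter (· < k)) (fun j => pauliAt L pauliZ j)
    (fun a _ b _ _ => pauliAt_Z_commute L a b)

/-- The odd Jordan–Wigner Majorana operator `m_{2k-1} = (∏_{j<k} σ^z_j) σ^x_k`. -/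
def jwOdd (L : ℕ) (k : Fin L) : Matrix (Fin L → Fin 2) (Fin L → Fin 2) ℂ :=
  zString L k * pauliAt L pauliX k

/-- The even Jordan–Wigner Majorana operator `m_{2k} = (∏_{j<k} σ^z_j) σ^y_k`. -/
def jwEven (L : ℕ) (k : Fin L) : Matrix (Fin L → Fin 2) (Fin L → Fin 2) ℂ :=
  zString L k * pauliAt L pauliY k


/-- The full family of Jordan–Wigner Majorana operators, indexed by `Fin L × Fin 2`:
the pair `(k, 0)` stands for `m_{2k-1}` and `(k, 1)` for `m_{2k}`. -/
def jw (L : ℕ) (p : Fin L × Fin 2) : Matrix (Fin L → Fin 2) (Fin L → Fin 2) ℂ :=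
  if p.2 = 0 then jwOdd L p.1 else jwEven L p.1

/-- The coupling matrix `A(J,B)` of the transverse-field Ising model: its only nonzero
entries are `A_{2k−1,2k} = 2B = −A_{2k,2k−1}` (`k = 1, …, L`) and
`A_{2k,2k+1} = 2J = −A_{2k+1,2k}` (`k = 1, …, L−1`), in the indexing where
`(k, 0)` stands for the Majorana index `2k−1` and `(k, 1)` for `2k`. -/
def isingCoupling (L : ℕ) (J B : ℝ) : Matrix (Fin L × Fin 2) (Fin L × Fin 2) ℝ :=
  (∑ k : Fin L,
      (Matrix.single (k, 0) (k, 1) (2 * B)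
        - Matrix.single (k, 1) (k, 0) (2 * B)))
  + ∑ k : Fin (L - 1),
      (Matrix.single (⟨k.1, by have := k.2; omega⟩, 1) (⟨k.1 + 1, by have := k.2; omega⟩, 0) (2 * J)
        - Matrix.single (⟨k.1 + 1, by have := k.2; omega⟩, 0) (⟨k.1, by have := k.2; omega⟩, 1) (2 * J))

/-- The transverse-field Ising Hamiltonian
`H_TFIM = −J ∑_{k=1}^{L−1} σ^x_k σ^x_{k+1} − B ∑_{k=1}^{L} σ^z_k` on `(ℂ²)^{⊗L}`. -/
def isingHamiltonian (L : ℕ) (J B : ℝ) : Matrix (Fin L → Fin 2) (Fin L → Fin 2) ℂ :=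
  -((J : ℂ) • ∑ k : Fin (L - 1),
      pauliAt L pauliX ⟨k.1, by have := k.2; omega⟩
        * pauliAt L pauliX ⟨k.1 + 1, by have := k.2; omega⟩)
  - (B : ℂ) • ∑ k : Fin L, pauliAt L pauliZ k

/-!
Write every operator as a site-wise Kronecker product. In `m_{2k-1} m_{2k}` the two
Jordan–Wigner strings cancel (`σ^z σ^z = 1`), leaving `σ^x σ^y = i σ^z` at site `k`. The
string of site `k + 1` is that of site `k` extended by `σ^z_k`, so in `m_{2k} m_{2k+1}`
everything cancels except `σ^y σ^z = i σ^x` at site `k` and `σ^x` at site `k + 1`. The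
antisymmetry of `A(J,B)` doubles each of these terms, and collecting the coefficients gives
`H_TFIM`.
-/

namespace Matrix

variable {ι n R : Type*} [Fintype ι] [CommRing R]

def piKron (f : ι → Matrix n n R) : Matrix (ι → n) (ι → n) R :=
  fun ν μ => ∏ i, f i (ν i) (μ i)

theorem piKron_mul [DecidableEq ι] [Fintype n] (f g : ι → Matrix n n R) :
    piKron f * piKron g = piKron (f * g) := by
  ext ν μ
  calc (piKron f * piKron g) ν μ
      = ∑ κ : ι → n, ∏ i, f i (ν i) (κ i) * g i (κ i) (μ i) := by
        simp only [mul_apply, piKron, Finset.prod_mul_distrib]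
    _ = ∏ i, ∑ a, f i (ν i) a * g i a (μ i) :=
        (Fintype.prod_sum fun i a => f i (ν i) a * g i a (μ i)).symm
    _ = piKron (f * g) ν μ := by simp only [piKron, Pi.mul_apply, mul_apply]

theorem piKron_one [DecidableEq n] : piKron (1 : ι → Matrix n n R) = 1 := by
  ext ν μ
  by_cases h : ν = μ
  · subst h; simp [piKron]
  · obtain ⟨i, hi⟩ := Function.ne_iff.mp h
    rw [one_apply_ne h]
    exact Finset.prod_eq_zero (Finset.mem_univ i) (by simp [one_apply_ne hi])

theorem piKron_update_smul [DecidableEq ι] (f : ι → Matrix n n R) (k : ι) (c : R)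
    (A : Matrix n n R) :
    piKron (Function.update f k (c • A)) = c • piKron (Function.update f k A) := by
  ext ν μ
  simp only [piKron, smul_apply, smul_eq_mul]
  rw [Fintype.prod_eq_mul_prod_compl k, Fintype.prod_eq_mul_prod_compl k]
  have hrest : ∀ i ∈ ({k}ᶜ : Finset ι),
      Function.update f k (c • A) i (ν i) (μ i) = Function.update f k A i (ν i) (μ i) :=
    fun i hi => by
      rw [Function.update_of_ne (by simpa using hi), Function.update_of_ne (by simpa using hi)]
  rw [Finset.prod_congr rfl hrest]
  simp only [Function.update_self, smul_apply, smul_eq_mul, mul_assoc]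

end Matrix

open Function

theorem pauliAt_eq_piKron (L : ℕ) (σ : Matrix (Fin 2) (Fin 2) ℂ) (k : Fin L) :
    pauliAt L σ k = piKron (update 1 k σ) := by
  ext ν μ
  refine Finset.prod_congr rfl fun j _ => ?_
  by_cases hj : j = k
  · subst hj; simp
  · simp [hj, one_apply]

theorem pauliAt_smul (L : ℕ) (c : ℂ) (σ : Matrix (Fin 2) (Fin 2) ℂ) (k : Fin L) :
    pauliAt L (c • σ) k = c • pauliAt L σ k := by
  rw [pauliAt_eq_piKron, pauliAt_eq_piKron, piKron_update_smul]

theorem noncommProd_pauliAt (L : ℕ) (σ : Matrix (Fin 2) (Fin 2) ℂ) (s : Finset (Fin L))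
    (h : (s : Set (Fin L)).Pairwise fun a b => Commute (pauliAt L σ a) (pauliAt L σ b)) :
    s.noncommProd (fun j => pauliAt L σ j) h = piKron fun j => if j ∈ s then σ else 1 := by
  induction s using Finset.induction with
  | empty => rw [Finset.noncommProd_empty, ← piKron_one]; rfl
  | @insert a s ha ih =>
    rw [Finset.noncommProd_insert_of_notMem _ _ _ _ ha, ih, pauliAt_eq_piKron, piKron_mul]
    congr 1
    funext j
    by_cases hj : j = a
    · subst hj; simp [ha]
    · by_cases hs : j ∈ s <;> simp [hj, hs]

def jwFactors {L : ℕ} (k : Fin L) (σ : Matrix (Fin 2) (Fin 2) ℂ) :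
    Fin L → Matrix (Fin 2) (Fin 2) ℂ :=
  fun j => if j < k then pauliZ else if j = k then σ else 1

theorem zString_mul_pauliAt (L : ℕ) (k : Fin L) (σ : Matrix (Fin 2) (Fin 2) ℂ) :
    zString L k * pauliAt L σ k = piKron (jwFactors k σ) := by
  rw [zString, noncommProd_pauliAt L pauliZ _ fun a _ b _ _ => pauliAt_Z_commute L a b,
    pauliAt_eq_piKron, piKron_mul]
  congr 1
  funext j
  rcases lt_trichotomy j k with h | rfl | h
  · simp [jwFactors, h, h.ne]
  · simp [jwFactors]
  · simp [jwFactors, h.ne', h.not_gt]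

theorem pauliZ_mul_pauliZ : pauliZ * pauliZ = 1 := by
  ext i j; fin_cases i <;> fin_cases j <;> 
    simp [pauliZ, mul_apply, Fin.sum_univ_two, one_apply]

theorem pauliX_mul_pauliY : pauliX * pauliY = Complex.I • pauliZ := by
  ext i j; fin_cases i <;> fin_cases j <;> 
    simp [pauliX, pauliY, pauliZ, mul_apply, Fin.sum_univ_two]

theorem pauliY_mul_pauliX : pauliY * pauliX = -Complex.I • pauliZ := by
  ext i j; fin_cases i <;> fin_cases j <;> 
    simp [pauliX, pauliY, pauliZ, mul_apply, Fin.sum_univ_two]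

theorem pauliY_mul_pauliZ : pauliY * pauliZ = Complex.I • pauliX := by
  ext i j; fin_cases i <;> fin_cases j <;> 
    simp [pauliX, pauliY, pauliZ, mul_apply, Fin.sum_univ_two]

theorem pauliZ_mul_pauliY : pauliZ * pauliY = -Complex.I • pauliX := by
  ext i j; fin_cases i <;> fin_cases j <;> 
    simp [pauliX, pauliY, pauliZ, mul_apply, Fin.sum_univ_two]

theorem jwFactors_mul_self {L : ℕ} (k : Fin L) (σ τ : Matrix (Fin 2) (Fin 2) ℂ) :
    jwFactors k σ * jwFactors k τ =
      update (1 : Fin L → Matrix (Fin 2) (Fin 2) ℂ) k (σ * τ) := by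
  funext j
  rcases lt_trichotomy j k with h | rfl | h
  · simp [jwFactors, h, h.ne, pauliZ_mul_pauliZ]
  · simp [jwFactors]
  · simp [jwFactors, h.ne', h.not_gt]

theorem jwFactors_succ {L : ℕ} {a b : Fin L} (hab : (b : ℕ) = a + 1)
    (τ : Matrix (Fin 2) (Fin 2) ℂ) :
    jwFactors b τ =
      jwFactors a pauliZ * update (1 : Fin L → Matrix (Fin 2) (Fin 2) ℂ) b τ := by
  have hlt : a < b := Fin.lt_def.mpr (by omega)
  funext j
  rcases lt_trichotomy j a with h | rfl | h
  · simp [jwFactors, h, h.trans hlt, (h.trans hlt).ne]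
  · simp [jwFactors, hlt, hlt.ne]
  · have hbj : b ≤ j := Fin.le_def.mpr (by have := Fin.lt_def.mp h; omega)
    rcases hbj.eq_or_lt with rfl | hbj
    · simp [jwFactors, hlt.not_gt, hlt.ne']
    · simp [jwFactors, h.not_gt, h.ne', hbj.not_gt, hbj.ne']

theorem commute_update_one_jwFactors {L : ℕ} {a b : Fin L} (hab : a < b)
    (σ τ : Matrix (Fin 2) (Fin 2) ℂ) :
    Commute (update (1 : Fin L → Matrix (Fin 2) (Fin 2) ℂ) b τ) (jwFactors a σ) := by
  refine funext fun j => ?_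
  by_cases hj : j = b
  · subst hj; simp [jwFactors, hab.not_gt, hab.ne']
  · simp [hj]

theorem jwOdd_mul_jwEven (L : ℕ) (k : Fin L) :
    jwOdd L k * jwEven L k = Complex.I • pauliAt L pauliZ k := by
  rw [jwOdd, jwEven, zString_mul_pauliAt, zString_mul_pauliAt, piKron_mul, jwFactors_mul_self,
    pauliX_mul_pauliY, piKron_update_smul, pauliAt_eq_piKron]

theorem jwEven_mul_jwOdd (L : ℕ) (k : Fin L) :
    jwEven L k * jwOdd L k = -Complex.I • pauliAt L pauliZ k := by
  rw [jwOdd, jwEven, zString_mul_pauliAt, zString_mul_pauliAt, piKron_mul, jwFactors_mul_self,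
    pauliY_mul_pauliX, piKron_update_smul, pauliAt_eq_piKron]

theorem jwEven_mul_jwOdd_succ (L : ℕ) {a b : Fin L} (hab : (b : ℕ) = a + 1) :
    jwEven L a * jwOdd L b = Complex.I • (pauliAt L pauliX a * pauliAt L pauliX b) := by
  rw [jwOdd, jwEven, zString_mul_pauliAt, zString_mul_pauliAt, jwFactors_succ hab, piKron_mul,
    ← mul_assoc, jwFactors_mul_self, ← piKron_mul, ← pauliAt_eq_piKron, ← pauliAt_eq_piKron,
    pauliY_mul_pauliZ, pauliAt_smul, smul_mul_assoc]

theorem jwOdd_succ_mul_jwEven (L : ℕ) {a b : Fin L} (hab : (b : ℕ) = a + 1) :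
    jwOdd L b * jwEven L a = -Complex.I • (pauliAt L pauliX a * pauliAt L pauliX b) := by
  rw [jwOdd, jwEven, zString_mul_pauliAt, zString_mul_pauliAt, jwFactors_succ hab, piKron_mul,
    mul_assoc, (commute_update_one_jwFactors (Fin.lt_def.mpr (by omega)) _ _).eq, ← mul_assoc,
    jwFactors_mul_self, ← piKron_mul, ← pauliAt_eq_piKron, ← pauliAt_eq_piKron,
    pauliZ_mul_pauliY, pauliAt_smul, smul_mul_assoc]

section CoefficientSum

variable {ι X : Type*} [Fintype ι] [AddCommGroup X] [Module ℂ X]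

def coeffSum (M : ι → ι → X) : Matrix ι ι ℝ →+ X :=
  AddMonoidHom.mk' (fun A => ∑ p, ∑ q, (A p q : ℂ) • M p q) fun A A' => by
    simp only [Matrix.add_apply, Complex.ofReal_add, add_smul, Finset.sum_add_distrib]

theorem coeffSum_apply (M : ι → ι → X) (A : Matrix ι ι ℝ) :
    coeffSum M A = ∑ p, ∑ q, (A p q : ℂ) • M p q := rfl

theorem coeffSum_single [DecidableEq ι] (M : ι → ι → X) (a b : ι) (c : ℝ) :
    coeffSum M (single a b c) = (c : ℂ) • M a b := by
  simp [coeffSum_apply, single, ite_and, apply_ite (fun x : ℝ => (x : ℂ)), ite_smul]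

end CoefficientSum

theorem ising_eq_quadratic_majorana (L : ℕ) (J B : ℝ) :
    isingHamiltonian L J B
      = (Complex.I / 4) •
          ∑ p : Fin L × Fin 2, ∑ q : Fin L × Fin 2,
            (isingCoupling L J B p q : ℂ) • (jw L p * jw L q) := by
  have bond_even_odd : ∀ k : Fin (L - 1),
      jwEven L ⟨k, by omega⟩ * jwOdd L ⟨k + 1, by omega⟩ =
        Complex.I •
          (pauliAt L pauliX ⟨k, by omega⟩ * pauliAt L pauliX ⟨k + 1, by omega⟩) :=
    fun k => jwEven_mul_jwOdd_succ L rfl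
  have bond_odd_even : ∀ k : Fin (L - 1),
      jwOdd L ⟨k + 1, by omega⟩ * jwEven L ⟨k, by omega⟩ =
        -Complex.I •
          (pauliAt L pauliX ⟨k, by omega⟩ * pauliAt L pauliX ⟨k + 1, by omega⟩) :=
    fun k => jwOdd_succ_mul_jwEven L rfl
  rw [← coeffSum_apply, isingCoupling]
  simp only [map_add, map_sum, map_sub, coeffSum_single, jw, one_ne_zero, ↓reduceIte,
    jwOdd_mul_jwEven, jwEven_mul_jwOdd, bond_even_odd, bond_odd_even, smul_smul, ← sub_smul,
    ← Finset.smul_sum, smul_add]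
  rw [isingHamiltonian, sub_eq_add_neg, ← neg_smul, ← neg_smul, add_comm]
  congr 2
  · push_cast
    linear_combination (-(B : ℂ)) * Complex.I_sq
  · push_cast
    linear_combination (-(J : ℂ)) * Complex.I_sq

end
end

section
/- Let M_t, M_p ∈ ℝ^{2L×2L} be antisymmetric matrices, let Ω := {(j,k) : 1 ≤ j < k ≤ 2L, (M_t)_{j,k} ≠ 0}, and let c := Σ_{(j,k)∈Ω} |(M_t)_{j,k}|, assumed positive. Suppose for each (j,k) ∈ Ω and each β ∈ {+1, −1} one is given p_{β|j,k} ∈ [0,1] with p_{+1|j,k} + p_{−1|j,k} = 1 and p_{+1|j,k} − p_{−1|j,k} = (M_p)_{j,k}. Define P_{β,j,k} := p_{β|j,k} · |(M_t)_{j,k}| / c and X_{β,j,k} := 2 c β · sgn((M_t)_{j,k}). Then (P_{β,j,k})_{β∈{±1},(j,k)∈Ω} is a probability distribution (all values nonnegative and summing to 1), and Σ_{β∈{±1}} Σ_{(j,k)∈Ω} P_{β,j,k} X_{β,j,k} = tr(M_pᵀ M_t). -/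
/-!
Pair the two outcomes β = ±1 at each (j, k) ∈ Ω: their probabilities add up to |(M_t)_{jk}| / c,
and their contributions to the mean add up to 2 (p₊ − p₋) sgn(m) |m| = 2 (M_p)_{jk} (M_t)_{jk}
with m = (M_t)_{jk}. Since both matrices are antisymmetric, tr(M_pᵀ M_t) = Σ_{j,k} (M_p)_{jk} (M_t)_{jk}
is twice the sum over j < k, and the pairs with (M_t)_{jk} = 0 left out of Ω contribute nothing.
-/

open Matrix Finset

theorem Real.sign_mul_abs (x : ℝ) : Real.sign x * |x| = x := by
  rcases lt_trichotomy x 0 with h | rfl | h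
  · rw [Real.sign_of_neg h, abs_of_neg h, neg_one_mul, neg_neg]
  · rw [abs_zero, mul_zero]
  · rw [Real.sign_of_pos h, abs_of_pos h, one_mul]

theorem Finset.sum_sum_eq_two_nsmul_sum_lt {ι M : Type*} [Fintype ι] [LinearOrder ι]
    [AddCommMonoid M] (f : ι → ι → M) (hsymm : ∀ i j, f i j = f j i) (hdiag : ∀ i, f i i = 0) :
    ∑ i, ∑ j, f i j = 2 • ∑ p : ι × ι with p.1 < p.2, f p.1 p.2 := by
  have hsplit : ∀ p : ι × ι,
      f p.1 p.2 = (if p.1 < p.2 then f p.1 p.2 else 0) + if p.2 < p.1 then f p.1 p.2 else 0 := by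
    rintro ⟨i, j⟩
    rcases lt_trichotomy i j with h | rfl | h
    · simp [h, h.not_gt]
    · simp [hdiag]
    · simp [h, h.not_gt]
  have hswap : ∑ p : ι × ι with p.2 < p.1, f p.1 p.2 = ∑ p : ι × ι with p.1 < p.2, f p.1 p.2 :=
    sum_equiv (Equiv.prodComm ι ι) (by simp) fun p _ => hsymm p.1 p.2
  rw [← Fintype.sum_prod_type', Fintype.sum_congr _ _ hsplit, sum_add_distrib, ← sum_filter,
    ← sum_filter, hswap, two_nsmul]

theorem Matrix.trace_transpose_mul_eq_sum {m n R : Type*} [Fintype m] [Fintype n]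
    [NonUnitalNonAssocSemiring R] (A B : Matrix m n R) :
    (Aᵀ * B).trace = ∑ i, ∑ j, A i j * B i j := by
  simp only [trace, diag_apply, mul_apply, transpose_apply]
  exact sum_comm

theorem Matrix.trace_transpose_mul_eq_two_mul_sum_lt {n R : Type*} [Fintype n] [LinearOrder n]
    [Ring R] [IsAddTorsionFree R] {A B : Matrix n n R} (hA : Aᵀ = -A) (hB : Bᵀ = -B) :
    (Aᵀ * B).trace = 2 * ∑ p : n × n with p.1 < p.2, A p.1 p.2 * B p.1 p.2 := by
  have hA' : ∀ i j, A j i = -A i j := fun i j => congrFun (congrFun hA i) j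
  have hB' : ∀ i j, B j i = -B i j := fun i j => congrFun (congrFun hB i) j
  rw [trace_transpose_mul_eq_sum, sum_sum_eq_two_nsmul_sum_lt, two_nsmul, two_mul]
  · intro i j
    rw [hA', hB', neg_mul_neg]
  · intro i
    rw [neg_eq_self.mp (hA' i i).symm, zero_mul]

theorem importance_sampling_mean {L : ℕ}
    (Mt Mp : Matrix (Fin (2 * L)) (Fin (2 * L)) ℝ)
    (hMt : Mtᵀ = -Mt) (hMp : Mpᵀ = -Mp)
    (Ω : Finset (Fin (2 * L) × Fin (2 * L)))
    (hΩ : Ω = Finset.univ.filter (fun p => p.1 < p.2 ∧ Mt p.1 p.2 ≠ 0))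
    (c : ℝ) (hc : c = ∑ p ∈ Ω, |Mt p.1 p.2|) (hcpos : 0 < c)
    (pc : Bool → Fin (2 * L) × Fin (2 * L) → ℝ)
    (hpc01 : ∀ β, ∀ p ∈ Ω, pc β p ∈ Set.Icc (0 : ℝ) 1)
    (hpcsum : ∀ p ∈ Ω, pc true p + pc false p = 1)
    (hpcdiff : ∀ p ∈ Ω, pc true p - pc false p = Mp p.1 p.2)
    (P X : Bool → Fin (2 * L) × Fin (2 * L) → ℝ)
    (hP : ∀ β p, P β p = pc β p * |Mt p.1 p.2| / c)
    (hX : ∀ β p, X β p = 2 * c * (if β then 1 else -1) * Real.sign (Mt p.1 p.2)) :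
    (∀ β, ∀ p ∈ Ω, 0 ≤ P β p) ∧
      (∑ β : Bool, ∑ p ∈ Ω, P β p) = 1 ∧
      (∑ β : Bool, ∑ p ∈ Ω, P β p * X β p) = (Mpᵀ * Mt).trace := by
  refine ⟨fun β p hp => ?_, ?_, ?_⟩
  · have := (hpc01 β p hp).1
    rw [hP]
    positivity
  · calc ∑ β : Bool, ∑ p ∈ Ω, P β p = ∑ p ∈ Ω, |Mt p.1 p.2| / c := by
          rw [Fintype.sum_bool, ← sum_add_distrib]
          refine sum_congr rfl fun p hp => ?_
          rw [hP, hP, ← add_div, ← add_mul, hpcsum p hp, one_mul]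
      _ = 1 := by rw [← sum_div, ← hc, div_self hcpos.ne']
  · calc ∑ β : Bool, ∑ p ∈ Ω, P β p * X β p = ∑ p ∈ Ω, 2 * (Mp p.1 p.2 * Mt p.1 p.2) := by
          rw [Fintype.sum_bool, ← sum_add_distrib]
          refine sum_congr rfl fun p hp => ?_
          have hm := Real.sign_mul_abs (Mt p.1 p.2)
          rw [hP, hP, hX, hX, ← hpcdiff p hp, if_pos rfl, if_neg Bool.false_ne_true]
          field_simp
          linear_combination (pc true p - pc false p) * hm
      _ = 2 * ∑ p : Fin (2 * L) × Fin (2 * L) with p.1 < p.2, Mp p.1 p.2 * Mt p.1 p.2 := by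
          rw [← mul_sum, hΩ, ← filter_filter, sum_filter_of_ne fun p _ h => right_ne_zero_of_mul h]
      _ = (Mpᵀ * Mt).trace := (trace_transpose_mul_eq_two_mul_sum_lt hMp hMt).symm
end
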